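/- arXiv:2510.09102 — 2 statements merged into one kernel-verified Lean document; each statement's English description precedes it below -/
import Mathlib

section
/- There is an absolute constant C > 0 such that for all real x ≥ 2 and all integers r ≥ 2. k ≥ 1, one has Σ_{h ≤ x} τ_r(h)^k ≤ C · (x · r^k / (r!)^{(r^k − 1)/(r − 1)}) · (ln x + r^k − 1)^{r^k − 1}, where the sum runs over positive integers h ≤ x. -/
/-!
As arithmetic functions `τ_r = ζ ^ r`. This is multiplicative with `τ_r(p ^ e)` the number of
multisets of size `e` on `r` letters, and `(a)_e (b)_e ≤ e! (ab)_e` for rising factorials, so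
`τ_a τ_b ≤ τ_{ab}` and hence `τ_r ^ k ≤ τ_{r ^ k}` pointwise. Writing `τ_{n+1} = ζ * τ_n` and
inducting on `n` gives `∑_{h ≤ y} τ_{n+1}(h) ≤ y (log y + n) ^ n / n!`; the inductive step needs
`∑_{d ≤ y} (log (y / d) + n) ^ n / d ≤ (log y + n + 1) ^ (n + 1) / (n + 1)`, a discrete version
of `∫ t ^ n dt`, obtained by telescoping against the harmonic numbers `H_d ≤ 1 + log d`.
Finally `(r!) ^ (1 + r + ⋯ + r ^ (k-1)) ≤ (r ^ k)!` by iterating `a! ^ b b! ≤ (ab)!`, so `C = 1`.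
-/

open Finset

/-- The `r`-fold divisor function `τ_r(h)`: the number of ordered `r`-tuples
`(d₁, …, d_r)` of positive integers with `d₁ d₂ ⋯ d_r = h`. -/
def tau (r h : ℕ) : ℕ :=
  ((Fintype.piFinset fun _ : Fin r => Finset.Icc 1 h).filter fun d => ∏ i, d i = h).card

open scoped Nat

section ZetaPow

open ArithmeticFunction
open scoped ArithmeticFunction.zeta

theorem tau_eq_card_finMulAntidiag (r n : ℕ) : tau r n = #(Nat.finMulAntidiag r n) := by
  rw [tau]
  congr 1
  ext d
  simp only [mem_filter, Fintype.mem_piFinset, mem_Icc, Nat.mem_finMulAntidiag]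
  constructor
  · rintro ⟨hd, rfl⟩
    exact ⟨rfl, (prod_pos fun i _ => (hd i).1).ne'⟩
  · rintro ⟨rfl, hn⟩
    refine ⟨fun i => ⟨Nat.pos_of_ne_zero fun h0 => hn ?_, ?_⟩, rfl⟩
    · exact prod_eq_zero (mem_univ i) h0
    · exact Nat.le_of_dvd (Nat.pos_of_ne_zero hn) (dvd_prod_of_mem d (mem_univ i))

theorem Nat.card_finMulAntidiag_succ (m n : ℕ) :
    #(finMulAntidiag (m + 1) n) = ∑ d ∈ n.divisors, #(finMulAntidiag m d) := by
  rw [← Finset.card_sigma]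
  refine card_nbij' (fun f => ⟨∏ i, Fin.tail f i, Fin.tail f⟩) (fun g => Fin.cons (n / g.1) g.2)
    ?_ ?_ ?_ ?_
  · intro f hf
    simp only [coe_sigma, Set.mem_sigma_iff, mem_coe, mem_finMulAntidiag, mem_divisors] at hf ⊢
    rw [Fin.prod_univ_succ] at hf
    refine ⟨⟨Dvd.intro_left _ hf.1, hf.2⟩, trivial, fun h0 => hf.2 ?_⟩
    rw [← hf.1, ← Fin.tail_def, h0, mul_zero]
  · rintro ⟨d, g⟩ hg
    simp only [coe_sigma, Set.mem_sigma_iff, mem_coe, mem_finMulAntidiag, mem_divisors] at hg ⊢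
    obtain ⟨⟨hdn, hn⟩, hg, -⟩ := hg
    refine ⟨?_, hn⟩
    simp only [Fin.prod_univ_succ, Fin.cons_zero, Fin.cons_succ, hg, Nat.div_mul_cancel hdn]
  · intro f hf
    simp only [mem_coe, mem_finMulAntidiag, Fin.prod_univ_succ] at hf
    have htail : ∏ i : Fin m, f i.succ ≠ 0 := right_ne_zero_of_mul (hf.1 ▸ hf.2)
    conv_rhs => rw [← Fin.cons_self_tail f]
    simp only [Fin.tail, ← hf.1, Nat.mul_div_cancel _ (Nat.pos_of_ne_zero htail)]
  · rintro ⟨d, g⟩ hg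
    simp only [coe_sigma, Set.mem_sigma_iff, mem_coe, mem_finMulAntidiag] at hg
    simp [Fin.tail_cons, hg.2.1]

theorem tau_eq_zeta_pow_apply (r n : ℕ) : tau r n = (ζ ^ r) n := by
  induction r generalizing n with
  | zero =>
    rw [tau_eq_card_finMulAntidiag, pow_zero, one_apply]
    split_ifs with hn
    · simp [hn, Nat.finMulAntidiag_one]
    · simp [Nat.finMulAntidiag_zero_left hn]
  | succ m ih =>
    rw [tau_eq_card_finMulAntidiag, Nat.card_finMulAntidiag_succ, pow_succ', zeta_mul_apply]
    exact sum_congr rfl fun d _ => by rw [← ih, tau_eq_card_finMulAntidiag]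

theorem ArithmeticFunction.zeta_pow_apply_prime_pow {p : ℕ} (hp : p.Prime) (r e : ℕ) :
    (ζ ^ r) (p ^ e) = r.multichoose e := by
  induction r generalizing e with
  | zero =>
    rcases e with _ | e
    · simp
    · simp [hp.one_lt.ne']
  | succ r ih =>
    rw [pow_succ', zeta_mul_apply, Nat.sum_divisors_prime_pow hp,
      sum_congr rfl fun i _ => ih i, Nat.sum_range_multichoose, Nat.multichoose_eq,
      show r + 1 + e - 1 = e + r by omega, Nat.choose_symm_add]

theorem Nat.ascFactorial_mul_ascFactorial_le {a b : ℕ} (ha : 1 ≤ a) (hb : 1 ≤ b) (e : ℕ) :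
    a.ascFactorial e * b.ascFactorial e ≤ e ! * (a * b).ascFactorial e := by
  induction e with
  | zero => simp
  | succ e ih =>
    -- the difference of the two sides is `e (a - 1) (b - 1)`
    have key : (a + e) * (b + e) ≤ (e + 1) * (a * b + e) := by
      obtain ⟨a, rfl⟩ := Nat.exists_eq_add_of_le ha
      obtain ⟨b, rfl⟩ := Nat.exists_eq_add_of_le hb
      nlinarith [Nat.zero_le (e * a * b)]
    simp only [ascFactorial_succ, factorial_succ]
    calc (a + e) * a.ascFactorial e * ((b + e) * b.ascFactorial e)
        = (a + e) * (b + e) * (a.ascFactorial e * b.ascFactorial e) := by ring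
      _ ≤ (e + 1) * (a * b + e) * (e ! * (a * b).ascFactorial e) := by gcongr
      _ = (e + 1) * e ! * ((a * b + e) * (a * b).ascFactorial e) := by ring

theorem Nat.multichoose_mul_multichoose_le (a b e : ℕ) :
    a.multichoose e * b.multichoose e ≤ (a * b).multichoose e := by
  rcases Nat.eq_zero_or_pos a with rfl | ha
  · rcases e with _ | e <;> simp
  rcases Nat.eq_zero_or_pos b with rfl | hb
  · rcases e with _ | e <;> simp
  have hasc : ∀ n : ℕ, n.ascFactorial e = e ! * n.multichoose e := fun n => by
    rw [ascFactorial_eq_factorial_mul_choose', multichoose_eq]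
  have := ascFactorial_mul_ascFactorial_le ha hb e
  rw [hasc, hasc, hasc] at this
  refine Nat.le_of_mul_le_mul_left ?_ (Nat.mul_pos e.factorial_pos e.factorial_pos)
  linarith

theorem ArithmeticFunction.IsMultiplicative.mul_apply_le_of_prime_pow
    {f g h : ArithmeticFunction ℕ} (hf : f.IsMultiplicative) (hg : g.IsMultiplicative)
    (hh : h.IsMultiplicative) (hle : ∀ p e : ℕ, p.Prime → f (p ^ e) * g (p ^ e) ≤ h (p ^ e))
    (n : ℕ) : f n * g n ≤ h n := by
  rcases eq_or_ne n 0 with rfl | hn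
  · simp
  rw [← pmul_apply, (hf.pmul hg).multiplicative_factorization _ hn,
    hh.multiplicative_factorization _ hn]
  exact prod_le_prod (fun _ _ => Nat.zero_le _) fun p hp =>
    hle p _ (Nat.prime_of_mem_primeFactors hp)

theorem ArithmeticFunction.zeta_pow_mul_zeta_pow_apply_le (a b n : ℕ) :
    (ζ ^ a) n * (ζ ^ b) n ≤ (ζ ^ (a * b)) n := by
  refine IsMultiplicative.mul_apply_le_of_prime_pow isMultiplicative_zeta.pow
    isMultiplicative_zeta.pow isMultiplicative_zeta.pow (fun p e hp => ?_) n
  simp only [zeta_pow_apply_prime_pow hp]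
  exact Nat.multichoose_mul_multichoose_le a b e

theorem tau_pow_le_tau_pow (r k : ℕ) {n : ℕ} (hn : n ≠ 0) : tau r n ^ k ≤ tau (r ^ k) n := by
  induction k with
  | zero => simp [tau_eq_zeta_pow_apply, zeta_apply_ne hn]
  | succ k ih =>
    calc tau r n ^ (k + 1) = tau r n ^ k * tau r n := pow_succ _ _
      _ ≤ tau (r ^ k) n * tau r n := Nat.mul_le_mul_right _ ih
      _ ≤ tau (r ^ (k + 1)) n := by
        simpa only [tau_eq_zeta_pow_apply, pow_succ] using zeta_pow_mul_zeta_pow_apply_le _ _ n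

theorem sum_Icc_tau_succ_eq_sum_sum (m N : ℕ) :
    ∑ h ∈ Icc 1 N, tau (m + 1) h = ∑ d ∈ Icc 1 N, ∑ q ∈ Icc 1 (N / d), tau m q := by
  have hIoc : ∀ M : ℕ, Icc 1 M = Ioc 0 M := fun M => Icc_add_one_left_eq_Ioc 0 M
  simp only [tau_eq_zeta_pow_apply, hIoc, pow_succ', sum_Ioc_mul_eq_sum_sum]
  refine sum_congr rfl fun d hd => ?_
  rw [zeta_apply_ne (mem_Ioc.mp hd).1.ne', one_mul]

end ZetaPow

theorem add_one_mul_pow_mul_sub_le_pow_sub_pow {R : Type*} [CommRing R] [LinearOrder R]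
    [IsStrictOrderedRing R] {a b : R} (hb : 0 ≤ b) (hba : b ≤ a) (n : ℕ) :
    (n + 1) * b ^ n * (a - b) ≤ a ^ (n + 1) - b ^ (n + 1) := by
  rw [← geom_sum₂_mul]
  refine mul_le_mul_of_nonneg_right ?_ (sub_nonneg.mpr hba)
  calc (n + 1 : R) * b ^ n = ∑ i ∈ range (n + 1), b ^ i * b ^ (n + 1 - 1 - i) := by
        rw [sum_congr rfl fun i hi => by
          rw [← pow_add, Nat.add_sub_cancel, Nat.add_sub_cancel' (mem_range_succ_iff.mp hi)]]
        simp
    _ ≤ ∑ i ∈ range (n + 1), a ^ i * b ^ (n + 1 - 1 - i) := by gcongr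

theorem sum_sub_harmonic_pow_div_le (n N : ℕ) {c : ℝ} (hc : harmonic N ≤ c) :
    ∑ d ∈ Icc 1 N, (c - harmonic d) ^ n / d ≤ c ^ (n + 1) / (n + 1) := by
  suffices h : ∀ N : ℕ, harmonic N ≤ c →
      ∑ d ∈ Icc 1 N, (c - harmonic d) ^ n / d + (c - harmonic N) ^ (n + 1) / (n + 1)
        ≤ c ^ (n + 1) / (n + 1) by
    have hboundary : 0 ≤ (c - harmonic N) ^ (n + 1) / (n + 1) := by
      have := sub_nonneg.mpr hc
      positivity
    linarith [h N hc]
  intro N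
  induction N with
  | zero => simp
  | succ N ih =>
    intro hc
    have hN : (harmonic (N + 1) : ℝ) = harmonic N + ((N : ℝ) + 1)⁻¹ := by
      push_cast [harmonic_succ]; ring
    have hgap : (0 : ℝ) ≤ ((N : ℝ) + 1)⁻¹ := by positivity
    have hb : 0 ≤ c - harmonic (N + 1) := sub_nonneg.mpr hc
    have hn : (0 : ℝ) < n + 1 := by positivity
    -- the new term and the new boundary term are paid for by the old boundary term
    have key : (c - harmonic (N + 1)) ^ n / ((N : ℝ) + 1)
          + (c - harmonic (N + 1)) ^ (n + 1) / (n + 1)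
        ≤ (c - harmonic N) ^ (n + 1) / (n + 1) := by
      have hstep := add_one_mul_pow_mul_sub_le_pow_sub_pow hb (le_add_of_nonneg_right hgap) n
      rw [add_sub_cancel_left] at hstep
      rw [show c - harmonic N = c - harmonic (N + 1) + ((N : ℝ) + 1)⁻¹ by rw [hN]; ring,
        le_div_iff₀ hn, add_mul, div_mul_cancel₀ _ hn.ne', div_eq_mul_inv]
      linear_combination hstep
    have := ih (by linarith)
    rw [sum_Icc_succ_top (by omega)]
    push_cast
    linarith

theorem sum_log_div_add_pow_div_le (n : ℕ) {y : ℝ} (hy : 1 ≤ y) :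
    ∑ d ∈ Icc 1 ⌊y⌋₊, (Real.log (y / d) + n) ^ n / d
      ≤ (Real.log y + n + 1) ^ (n + 1) / (n + 1) := by
  have hlog_le : ∀ d ∈ Icc 1 ⌊y⌋₊, Real.log d ≤ Real.log y := fun d hd =>
    Real.log_le_log (by have := (mem_Icc.mp hd).1; positivity)
      ((Nat.cast_le.mpr (mem_Icc.mp hd).2).trans (Nat.floor_le (by linarith)))
  have hc : (harmonic ⌊y⌋₊ : ℝ) ≤ Real.log y + n + 1 := by
    have := harmonic_le_one_add_log ⌊y⌋₊
    have := hlog_le ⌊y⌋₊ (mem_Icc.mpr ⟨Nat.one_le_floor_iff _ |>.mpr hy, le_rfl⟩)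
    linarith [(Nat.cast_nonneg n : (0 : ℝ) ≤ n)]
  refine le_trans (sum_le_sum fun d hd => ?_) (sum_sub_harmonic_pow_div_le n _ hc)
  have hd0 : (0 : ℝ) < d := by have := (mem_Icc.mp hd).1; positivity
  rw [Real.log_div (by linarith) hd0.ne']
  have h0 : 0 ≤ Real.log y - Real.log d + n := by
    linarith [hlog_le d hd, (Nat.cast_nonneg n : (0 : ℝ) ≤ n)]
  gcongr
  linarith [harmonic_le_one_add_log d]

theorem sum_tau_succ_le (n : ℕ) {y : ℝ} (hy : 1 ≤ y) :
    ∑ h ∈ Icc 1 ⌊y⌋₊, (tau (n + 1) h : ℝ) ≤ y * (Real.log y + n) ^ n / n ! := by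
  induction n generalizing y with
  | zero =>
    have hone : ∀ h ∈ Icc 1 ⌊y⌋₊, (tau 1 h : ℝ) = 1 := fun h hh => by
      rw [tau_eq_zeta_pow_apply, pow_one,
        ArithmeticFunction.zeta_apply_ne (by have := (mem_Icc.mp hh).1; omega)]
      simp
    rw [sum_congr rfl hone]
    simpa using Nat.floor_le (by linarith : (0 : ℝ) ≤ y)
  | succ n ih =>
    have hy0 : 0 < y := by linarith
    have hrec := congrArg (Nat.cast (R := ℝ)) (sum_Icc_tau_succ_eq_sum_sum (n + 1) ⌊y⌋₊)
    push_cast at hrec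
    rw [hrec]
    calc ∑ d ∈ Icc 1 ⌊y⌋₊, ∑ q ∈ Icc 1 (⌊y⌋₊ / d), (tau (n + 1) q : ℝ)
        ≤ ∑ d ∈ Icc 1 ⌊y⌋₊, y / d * (Real.log (y / d) + n) ^ n / n ! := by
          refine sum_le_sum fun d hd => ?_
          have hd0 : (0 : ℝ) < d := by have := (mem_Icc.mp hd).1; positivity
          rw [← Nat.floor_div_natCast]
          refine ih ?_
          rw [le_div_iff₀ hd0, one_mul]
          exact (Nat.cast_le.mpr (mem_Icc.mp hd).2).trans (Nat.floor_le hy0.le)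
      _ = y / n ! * ∑ d ∈ Icc 1 ⌊y⌋₊, (Real.log (y / d) + n) ^ n / d := by
          rw [mul_sum]
          exact sum_congr rfl fun d _ => by ring
      _ ≤ y / n ! * ((Real.log y + n + 1) ^ (n + 1) / (n + 1)) := by
          gcongr
          exact sum_log_div_add_pow_div_le n hy
      _ = y * (Real.log y + ↑(n + 1)) ^ (n + 1) / (n + 1)! := by
          rw [Nat.factorial_succ]
          push_cast
          field_simp
          ring

theorem Nat.factorial_mul_pow_le_ascFactorial (a b : ℕ) :
    a ! * (b + 1) ^ a ≤ (a * b + 1).ascFactorial a := by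
  rw [ascFactorial_eq_prod_range, ← prod_range_add_one_eq_factorial, ← card_range a,
    ← prod_const, card_range, ← prod_mul_distrib]
  refine prod_le_prod' fun i hi => ?_
  have := mem_range.mp hi
  nlinarith

theorem Nat.factorial_pow_mul_factorial_le {a : ℕ} (ha : 0 < a) (b : ℕ) :
    a ! ^ b * b ! ≤ (a * b)! := by
  induction b with
  | zero => simp
  | succ b ih =>
    calc a ! ^ (b + 1) * (b + 1)! = a ! ^ b * b ! * (a ! * (b + 1)) := by
          rw [factorial_succ]; ring
      _ ≤ (a * b)! * (a ! * (b + 1) ^ a) := by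
          gcongr
          exact _root_.le_self_pow (by omega) ha.ne'
      _ ≤ (a * b)! * (a * b + 1).ascFactorial a := by
          gcongr
          exact factorial_mul_pow_le_ascFactorial a b
      _ = (a * (b + 1))! := by rw [factorial_mul_ascFactorial, mul_add_one]

theorem Nat.factorial_pow_geom_sum_le {r : ℕ} (hr : 0 < r) (k : ℕ) :
    r ! ^ (∑ i ∈ range k, r ^ i) ≤ (r ^ k)! := by
  induction k with
  | zero => simp
  | succ k ih =>
    calc r ! ^ (∑ i ∈ range (k + 1), r ^ i) = (r ! ^ (∑ i ∈ range k, r ^ i)) ^ r * r ! := by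
          rw [geom_sum_succ, pow_succ, mul_comm r, pow_mul]
      _ ≤ (r ^ k)! ^ r * r ! := by gcongr
      _ ≤ (r ^ (k + 1))! := by
          rw [pow_succ]
          exact factorial_pow_mul_factorial_le (pow_pos hr k) r

/-- **Lemma 3, Mardzhanishvili.** There is an absolute constant `C > 0` such
that for all real `x ≥ 2` and all integers `r ≥ 2`, `k ≥ 1`,
`∑_{h ≤ x} τ_r(h)^k ≤ C · (x r^k / (r!)^{(r^k−1)/(r−1)}) · (ln x + r^k − 1)^{r^k − 1}`. -/
theorem sum_tau_pow_le : ∃ C : ℝ, 0 < C ∧ ∀ x : ℝ, 2 ≤ x → ∀ r k : ℕ, 2 ≤ r → 1 ≤ k →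
    ∑ h ∈ Finset.Icc 1 ⌊x⌋₊, (tau r h : ℝ) ^ k
      ≤ C * (x * (r : ℝ) ^ k /
            ((r.factorial : ℝ) ^ (((r : ℝ) ^ k - 1) / ((r : ℝ) - 1)))) *
          (Real.log x + (r : ℝ) ^ k - 1) ^ (r ^ k - 1) := by
  refine ⟨1, one_pos, fun x hx r k hr _ => ?_⟩
  obtain ⟨n, hn⟩ : ∃ n, r ^ k = n + 1 := Nat.exists_eq_add_one.mpr (pow_pos (by omega) k)
  have hrk : (r : ℝ) ^ k = n + 1 := by exact_mod_cast hn
  have hexp : ((r : ℝ) ^ k - 1) / ((r : ℝ) - 1) = ((∑ i ∈ range k, r ^ i : ℕ) : ℝ) := by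
    push_cast
    exact (geom_sum_eq (by norm_cast; omega) k).symm
  have hfact : (r ! : ℝ) ^ (∑ i ∈ range k, r ^ i) ≤ (n + 1) * n ! := by
    exact_mod_cast (Nat.factorial_pow_geom_sum_le (by omega) k).trans_eq
      (by rw [hn, Nat.factorial_succ])
  have hpow : ∑ h ∈ Icc 1 ⌊x⌋₊, (tau r h : ℝ) ^ k ≤ ∑ h ∈ Icc 1 ⌊x⌋₊, (tau (n + 1) h : ℝ) :=
    sum_le_sum fun h hh => by
      rw [← hn]
      exact_mod_cast tau_pow_le_tau_pow r k (by have := (mem_Icc.mp hh).1; omega)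
  rw [hexp, Real.rpow_natCast, show r ^ k - 1 = n by omega, hrk, one_mul,
    ← add_assoc, add_sub_cancel_right]
  refine hpow.trans ((sum_tau_succ_le n (by linarith)).trans ?_)
  have hL : 0 ≤ Real.log x + n := by
    have := Real.log_nonneg (by linarith : (1 : ℝ) ≤ x)
    positivity
  rw [div_mul_eq_mul_div, div_le_div_iff₀ (by positivity) (by positivity)]
  calc x * (Real.log x + n) ^ n * (r ! : ℝ) ^ (∑ i ∈ range k, r ^ i)
      ≤ x * (Real.log x + n) ^ n * ((n + 1) * n !) := by gcongr
    _ = x * (n + 1) * (Real.log x + n) ^ n * n ! := by ring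
end

section
/- Let α be a real number such that |α − a/q| ≤ 1/q² for some integers a, q with gcd(a, q) = 1 and q ≥ 2, let x ≥ 1 be real, y > 0 real, and β an arbitrary real number. Then Σ_{h ≤ x} min( y, 1/‖α h + β‖ ) ≤ 6 (x/q + 1)(y + q ln q), where the sum runs over positive integers h ≤ x. -/
open Finset

/-- `‖t‖`, the distance from the real number `t` to the nearest integer. -/
noncomputable def distNearestInt (t : ℝ) : ℝ := |t - (round t : ℤ)|

/-!
Write `α = a/q + ε` with `|ε| ≤ 1/q²`. In a block `h = N + r`, `0 ≤ r < q`, we have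
`α h + β = α r + β'`, which differs by at most `1/q` from `(a r + K + f)/q` with `K = ⌊β' q⌋` and
`f ∈ [0, 1)`. Since `a` is invertible mod `q`, the residue `j` of `a r + K` runs through every class
once, and it forces `‖α h + β‖ ≥ (min(j, q - 1 - j) - 1)/q`. A block therefore contributes at most
`2 (3 y + q ∑_{2 ≤ i < q} 1/i) ≤ 6 y + 2 q log q`, and `⌊x⌋/q + 1 ≤ x/q + 1` blocks cover `[1, x]`.
-/

lemma distNearestInt_le_abs_sub (t : ℝ) (m : ℤ) : distNearestInt t ≤ |t - m| := round_le t m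

lemma distNearestInt_add_intCast (t : ℝ) (m : ℤ) :
    distNearestInt (t + m) = distNearestInt t := by
  simp only [distNearestInt, round_add_intCast, Int.cast_add, add_sub_add_right_eq_sub]

lemma distNearestInt_sub_abs_le (s δ : ℝ) : distNearestInt s - |δ| ≤ distNearestInt (s + δ) := by
  have hs := distNearestInt_le_abs_sub s (round (s + δ))
  have htri := abs_sub_le s (s + δ) (round (s + δ) : ℝ)
  rw [sub_add_cancel_left, abs_neg] at htri
  exact (sub_le_sub_right hs _).trans (by unfold distNearestInt; linarith)

lemma min_le_distNearestInt (t : ℝ) : min t (1 - t) ≤ distNearestInt t := by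
  unfold distNearestInt
  rcases le_or_gt (round t) 0 with h | h
  · have : (round t : ℝ) ≤ 0 := by exact_mod_cast h
    exact (min_le_left _ _).trans ((by linarith : t ≤ t - round t).trans (le_abs_self _))
  · have : (1 : ℝ) ≤ round t := by exact_mod_cast h
    exact (min_le_right _ _).trans ((by linarith : 1 - t ≤ -(t - round t)).trans (neg_le_abs _))

lemma sub_one_div_le_distNearestInt {q : ℕ} [NeZero q] (n : ℤ) {f δ : ℝ} (hf0 : 0 ≤ f)
    (hf1 : f ≤ 1) (hδ : |δ| ≤ 1 / q) :
    ((min (n : ZMod q).val (q - 1 - (n : ZMod q).val) : ℕ) - 1 : ℝ) / q ≤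
      distNearestInt ((n + f) / q + δ) := by
  set j := (n : ZMod q).val
  set k := min j (q - 1 - j)
  have hq : (0 : ℝ) < q := Nat.cast_pos.2 (NeZero.pos q)
  have hkj : (k : ℝ) ≤ j := by exact_mod_cast min_le_left _ _
  have hkq : (k : ℝ) + j + 1 ≤ q := by
    have := ZMod.val_lt (n : ZMod q)
    exact_mod_cast (by omega : k + j + 1 ≤ q)
  have hn : (n : ℝ) = j + q * (n / q : ℤ) := by
    have : n = (j : ℤ) + q * (n / q) := by rw [ZMod.val_intCast, Int.emod_add_mul_ediv]
    exact_mod_cast this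
  have hsplit : (n + f) / q + δ = ((j + f) / q + δ) + (n / q : ℤ) := by
    rw [hn]; field_simp; ring
  have hk : (k : ℝ) / q ≤ min ((j + f) / q) (1 - (j + f) / q) := by
    refine le_min (by gcongr; linarith) ?_
    rw [le_sub_iff_add_le, ← add_div, div_le_one hq]
    linarith
  rw [hsplit, distNearestInt_add_intCast, sub_div]
  linarith [min_le_distNearestInt ((j + f) / q), distNearestInt_sub_abs_le ((j + f) / q) δ]

lemma injOn_range_val_intCast_mul_add {a : ℤ} {q : ℕ} [NeZero q] (hgcd : Int.gcd a q = 1)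
    (K : ℤ) : Set.InjOn (fun r : ℕ ↦ ((a * r + K : ℤ) : ZMod q).val) (range q) := by
  intro r hr r' hr' h
  have hunit : IsUnit (a : ZMod q) := by
    rw [ZMod.coe_int_isUnit_iff_isCoprime, Int.isCoprime_iff_gcd_eq_one, Int.gcd_comm]
    exact hgcd
  have h' : ((a * r + K : ℤ) : ZMod q) = ((a * r' + K : ℤ) : ZMod q) := ZMod.val_injective _ h
  push_cast at h'
  exact CharP.natCast_injOn_Iio (ZMod q) q (mem_range.1 hr) (mem_range.1 hr')
    (hunit.mul_left_cancel (add_right_cancel h'))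

lemma sum_Ico_two_inv_le_log (n : ℕ) : ∑ i ∈ Ico 2 n, (i : ℝ)⁻¹ ≤ Real.log n := by
  rcases Nat.eq_zero_or_pos n with rfl | hn
  · simp
  have hharm := harmonic_le_one_add_log n
  rw [harmonic_eq_sum_Icc, ← add_sum_Ioc_eq_sum_Icc hn] at hharm
  push_cast at hharm
  have hsub : ∑ i ∈ Ico 2 n, (i : ℝ)⁻¹ ≤ ∑ i ∈ Ioc 1 n, (i : ℝ)⁻¹ :=
    sum_le_sum_of_subset_of_nonneg (fun i hi ↦ by simp only [mem_Ico, mem_Ioc] at hi ⊢; omega)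
      (fun _ _ _ ↦ by positivity)
  linarith

noncomputable def cappedInvDist (y t : ℝ) : ℝ :=
  if distNearestInt t = 0 then y else min y (1 / distNearestInt t)

lemma cappedInvDist_nonneg {y : ℝ} (hy : 0 ≤ y) (t : ℝ) : 0 ≤ cappedInvDist y t := by
  unfold cappedInvDist
  split_ifs
  · exact hy
  · exact le_min hy (one_div_nonneg.2 (abs_nonneg _))

lemma cappedInvDist_le_left (y t : ℝ) : cappedInvDist y t ≤ y := by
  unfold cappedInvDist
  split_ifs
  · exact le_rfl
  · exact min_le_left _ _

lemma cappedInvDist_le_one_div {y t c : ℝ} (hc : 0 < c) (h : c ≤ distNearestInt t) :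
    cappedInvDist y t ≤ 1 / c := by
  rw [cappedInvDist, if_neg (hc.trans_le h).ne']
  exact (min_le_right _ _).trans (one_div_le_one_div_of_le hc h)

noncomputable def residueWeight (q : ℕ) (y : ℝ) (k : ℕ) : ℝ :=
  if k ≤ 2 then y else q / ((k : ℝ) - 1)

lemma residueWeight_nonneg (q : ℕ) {y : ℝ} (hy : 0 ≤ y) (k : ℕ) : 0 ≤ residueWeight q y k := by
  unfold residueWeight
  split_ifs with hk
  · exact hy
  · have : (3 : ℝ) ≤ k := by exact_mod_cast (by omega : 3 ≤ k)
    exact div_nonneg (Nat.cast_nonneg q) (by linarith)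

lemma cappedInvDist_le_residueWeight {q : ℕ} [NeZero q] {y t : ℝ} {k : ℕ}
    (h : ((k : ℝ) - 1) / q ≤ distNearestInt t) : cappedInvDist y t ≤ residueWeight q y k := by
  unfold residueWeight
  split_ifs with hk
  · exact cappedInvDist_le_left y t
  · have : (3 : ℝ) ≤ k := by exact_mod_cast (by omega : 3 ≤ k)
    have hq : (0 : ℝ) < q := Nat.cast_pos.2 (NeZero.pos q)
    simpa only [one_div_div] using cappedInvDist_le_one_div (div_pos (by linarith) hq) h

lemma sum_range_residueWeight_le (q : ℕ) {y : ℝ} (hy : 0 ≤ y) :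
    ∑ k ∈ range q, residueWeight q y k ≤ 3 * y + q * Real.log q := by
  have hsub : range q ⊆ range 3 ∪ Ico (2 + 1) (q + 1) := by
    intro k hk
    simp only [mem_union, mem_range, mem_Ico] at hk ⊢
    omega
  have hdisj : Disjoint (range 3) (Ico (2 + 1) (q + 1)) := by
    rw [range_eq_Ico]
    exact Ico_disjoint_Ico_consecutive 0 3 (q + 1)
  have htail : ∑ k ∈ Ico (2 + 1) (q + 1), residueWeight q y k = q * ∑ i ∈ Ico 2 q, (i : ℝ)⁻¹ := by
    rw [← sum_Ico_add', mul_sum]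
    refine sum_congr rfl fun i hi ↦ ?_
    rw [residueWeight, if_neg (by simp only [mem_Ico] at hi; omega)]
    push_cast
    ring
  calc ∑ k ∈ range q, residueWeight q y k
      ≤ ∑ k ∈ range 3 ∪ Ico (2 + 1) (q + 1), residueWeight q y k :=
        sum_le_sum_of_subset_of_nonneg hsub fun k _ _ ↦ residueWeight_nonneg q hy k
    _ = 3 * y + q * ∑ i ∈ Ico 2 q, (i : ℝ)⁻¹ := by
        rw [sum_union hdisj, htail]
        simp only [residueWeight, sum_range_succ, range_one, sum_singleton, zero_le, ↓reduceIte,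
          Nat.one_le_ofNat, Std.le_refl]
        ring
    _ ≤ 3 * y + q * Real.log q := by gcongr; exact sum_Ico_two_inv_le_log q

lemma sum_range_residueWeight_min_le (q : ℕ) {y : ℝ} (hy : 0 ≤ y) :
    ∑ j ∈ range q, residueWeight q y (min j (q - 1 - j)) ≤ 2 * ∑ k ∈ range q, residueWeight q y k := by
  calc ∑ j ∈ range q, residueWeight q y (min j (q - 1 - j))
      ≤ ∑ j ∈ range q, (residueWeight q y j + residueWeight q y (q - 1 - j)) := by
        refine sum_le_sum fun j _ ↦ ?_
        have := residueWeight_nonneg q hy j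
        have := residueWeight_nonneg q hy (q - 1 - j)
        rcases min_choice j (q - 1 - j) with h | h <;> rw [h] <;> linarith
    _ = 2 * ∑ k ∈ range q, residueWeight q y k := by
        rw [sum_add_distrib, sum_range_reflect (residueWeight q y) q]
        ring

lemma sum_range_cappedInvDist_le {α : ℝ} {a : ℤ} {q : ℕ} [NeZero q] (hgcd : Int.gcd a q = 1)
    (happ : |α - (a : ℝ) / q| ≤ 1 / (q : ℝ) ^ 2) {y : ℝ} (hy : 0 ≤ y) (β : ℝ) :
    ∑ r ∈ range q, cappedInvDist y (α * r + β) ≤ 6 * y + 2 * q * Real.log q := by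
  have hq : (0 : ℝ) < q := Nat.cast_pos.2 (NeZero.pos q)
  set ε := α - (a : ℝ) / q
  set K := ⌊β * q⌋
  set f := β * q - K
  set j : ℕ → ℕ := fun r ↦ ((a * r + K : ℤ) : ZMod q).val
  have hf0 : 0 ≤ f := sub_nonneg.2 (Int.floor_le _)
  have hf1 : f ≤ 1 := by linarith [Int.lt_floor_add_one (β * q)]
  have hterm : ∀ r ∈ range q,
      cappedInvDist y (α * r + β) ≤ residueWeight q y (min (j r) (q - 1 - j r)) := by
    intro r hr
    have hr : (r : ℝ) ≤ q := by exact_mod_cast (mem_range.1 hr).le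
    have hεr : |ε * r| ≤ 1 / q := by
      rw [abs_mul, Nat.abs_cast]
      calc |ε| * r ≤ 1 / (q : ℝ) ^ 2 * q := by gcongr
        _ = 1 / q := by field_simp
    have hsplit : α * r + β = (((a * r + K : ℤ) : ℝ) + f) / q + ε * r := by
      simp only [ε, f]; push_cast; field_simp; ring
    exact cappedInvDist_le_residueWeight (hsplit ▸ sub_one_div_le_distNearestInt _ hf0 hf1 hεr)
  calc ∑ r ∈ range q, cappedInvDist y (α * r + β)
      ≤ ∑ r ∈ range q, residueWeight q y (min (j r) (q - 1 - j r)) := sum_le_sum hterm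
    _ = ∑ k ∈ (range q).image j, residueWeight q y (min k (q - 1 - k)) :=
        (sum_image (f := fun k ↦ residueWeight q y (min k (q - 1 - k)))
          (injOn_range_val_intCast_mul_add hgcd K)).symm
    _ ≤ ∑ k ∈ range q, residueWeight q y (min k (q - 1 - k)) :=
        sum_le_sum_of_subset_of_nonneg
          (image_subset_iff.2 fun _ _ ↦ mem_range.2 (ZMod.val_lt _))
          fun k _ _ ↦ residueWeight_nonneg q hy _
    _ ≤ 2 * (3 * y + q * Real.log q) := by
        grw [sum_range_residueWeight_min_le q hy, sum_range_residueWeight_le q hy]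
    _ = 6 * y + 2 * q * Real.log q := by ring

lemma sum_range_mul_le_nsmul {M : Type*} [AddCommMonoid M] [PartialOrder M]
    [IsOrderedAddMonoid M] {g : ℕ → M} {q : ℕ} {B : M} (hblock : ∀ N, ∑ r ∈ range q, g (N + r) ≤ B)
    (m : ℕ) : ∑ i ∈ range (m * q), g i ≤ m • B := by
  induction m with
  | zero => simp
  | succ m ih =>
    rw [add_one_mul, sum_range_add, succ_nsmul]
    exact add_le_add ih (hblock _)

/-- **Lemma 4.** Let `α` be real with `|α − a/q| ≤ 1/q²`, `gcd(a, q) = 1`,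
`q ≥ 2`; let `x ≥ 1`, `y > 0` be real and `β` arbitrary. Then
`∑_{h ≤ x} min(y, 1/‖α h + β‖) ≤ 6 (x/q + 1)(y + q ln q)`,
where the summand is interpreted as `y` when `‖α h + β‖ = 0`. -/
theorem sum_min_inv_norm_le (α β : ℝ) (a : ℤ) (q : ℕ) (hq : 2 ≤ q)
    (hgcd : Int.gcd a q = 1) (happ : |α - (a : ℝ) / q| ≤ 1 / (q : ℝ) ^ 2)
    (x : ℝ) (hx : 1 ≤ x) (y : ℝ) (hy : 0 < y) :
    ∑ h ∈ Finset.Icc 1 ⌊x⌋₊,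
        (if distNearestInt (α * h + β) = 0 then y
          else min y (1 / distNearestInt (α * h + β)))
      ≤ 6 * (x / q + 1) * (y + q * Real.log q) := by
  have : NeZero q := ⟨by omega⟩
  set n := ⌊x⌋₊
  set g : ℕ → ℝ := fun h ↦ cappedInvDist y (α * ((h + 1 : ℕ) : ℝ) + β)
  have hblock : ∀ N, ∑ r ∈ range q, g (N + r) ≤ 6 * y + 2 * q * Real.log q := fun N ↦ by
    convert sum_range_cappedInvDist_le hgcd happ hy.le (α * (N + 1) + β) using 3
    push_cast
    ring
  have hblocks : ((n / q + 1 : ℕ) : ℝ) ≤ x / q + 1 := by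
    push_cast
    grw [Nat.cast_div_le, Nat.floor_le (by linarith)]
  have hqlog : 0 ≤ (q : ℝ) * Real.log q := by positivity
  calc ∑ h ∈ Icc 1 n, cappedInvDist y (α * h + β) = ∑ h ∈ range n, g h := by
        rw [range_eq_Ico, sum_Ico_add' (fun h : ℕ ↦ cappedInvDist y (α * h + β)) 0 n 1, zero_add,
          Ico_add_one_right_eq_Icc]
    _ ≤ ∑ h ∈ range ((n / q + 1) * q), g h :=
        sum_le_sum_of_subset_of_nonneg
          (range_mono (mul_comm q _ ▸ (Nat.lt_mul_div_succ n (show 0 < q by omega)).le))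
          fun h _ _ ↦ cappedInvDist_nonneg hy.le _
    _ ≤ (n / q + 1) • (6 * y + 2 * q * Real.log q) := sum_range_mul_le_nsmul hblock _
    _ ≤ (x / q + 1) * (6 * (y + q * Real.log q)) := by
        rw [nsmul_eq_mul]
        exact mul_le_mul hblocks (by linarith) (by linarith) (by positivity)
    _ = 6 * (x / q + 1) * (y + q * Real.log q) := by ring
end
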